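/- Let I ⊂ S be a graded ideal and let ≺ be a graded monomial order. Then the minimum distance function δ_I is independent of ≺; more precisely, for every d ≥ 1, if the set F_d of all homogeneous zero-divisors of S/I of degree d not lying in I is nonempty, then δ_I(d) = deg(S/I) − max{deg(S/(I, f)) : f ∈ F_d}, and if F_d is empty then F_{≺,d} is empty so δ_I(d) = deg(S/I). -/

import Mathlib

open MvPolynomial Finsupp Filter

namespace MDF

open scoped Classical

variable (K : Type*) [Field K] (s : ℕ)

/-- The Hilbert function of `S/I` in degree `d`: `dim_K (S_d / I_d)`. -/
noncomputable def hilbertFn (I : Ideal (MvPolynomial (Fin s) K)) (d : ℕ) : ℕ :=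
  Module.finrank K
    ((homogeneousSubmodule (Fin s) K d) ⧸
      (Submodule.comap (homogeneousSubmodule (Fin s) K d).subtype (I.restrictScalars K)))

/-- The Krull dimension of `S/I`, as a natural number. -/
noncomputable def krullDimQ (I : Ideal (MvPolynomial (Fin s) K)) : ℕ :=
  ((WithBot.unbotD 0 (ringKrullDim (MvPolynomial (Fin s) K ⧸ I))).untopD 0)

/-- The degree (multiplicity) of `S/I`: if `k = dim (S/I) ≥ 1`, it is
`(k-1)! · lim_d H_I(d)/d^(k-1)`, and it is `dim_K (S/I)` if `k = 0`. -/
noncomputable def degQ (I : Ideal (MvPolynomial (Fin s) K)) : ℕ :=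
  if krullDimQ K s I = 0 then Module.finrank K (MvPolynomial (Fin s) K ⧸ I)
  else Classical.epsilon (fun D : ℕ =>
    Tendsto (fun d : ℕ => (hilbertFn K s I d : ℝ) / (d : ℝ) ^ (krullDimQ K s I - 1)) atTop
      (nhds ((D : ℝ) / (Nat.factorial (krullDimQ K s I - 1)))))

/-- The regularity of the Hilbert function of `S/I`: the least `r ≥ 0` from which the
Hilbert function agrees with a polynomial (necessarily the Hilbert polynomial). -/
noncomputable def regQ (I : Ideal (MvPolynomial (Fin s) K)) : ℕ :=
  sInf { r : ℕ | ∃ P : Polynomial ℚ, ∀ d : ℕ, r ≤ d → (hilbertFn K s I d : ℚ) = P.eval (d : ℚ) }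

/-- The height of an ideal: the infimum of the heights of the primes containing it. -/
noncomputable def heightQ (I : Ideal (MvPolynomial (Fin s) K)) : ℕ∞ :=
  ⨅ p ∈ { p : PrimeSpectrum (MvPolynomial (Fin s) K) | I ≤ p.asIdeal }, Order.height p

/-- An ideal is a complete intersection if it can be generated by `ht(I)` elements. -/
def IsCompleteIntersection (I : Ideal (MvPolynomial (Fin s) K)) : Prop :=
  ∃ (n : ℕ) (f : Fin n → MvPolynomial (Fin s) K),
    (n : ℕ∞) = heightQ K s I ∧ I = Ideal.span (Set.range f)

/-- An ideal is unmixed if all its associated primes have the same height. -/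
def IsUnmixed (I : Ideal (MvPolynomial (Fin s) K)) : Prop :=
  ∀ p ∈ associatedPrimes (MvPolynomial (Fin s) K) (MvPolynomial (Fin s) K ⧸ I),
    ∀ q ∈ associatedPrimes (MvPolynomial (Fin s) K) (MvPolynomial (Fin s) K ⧸ I),
      heightQ K s p = heightQ K s q

/-- A graded (homogeneous) ideal: it contains all homogeneous components of its elements. -/
def IsGradedIdeal (I : Ideal (MvPolynomial (Fin s) K)) : Prop :=
  ∀ f ∈ I, ∀ n : ℕ, homogeneousComponent n f ∈ I

variable {K s} in
/-- A graded monomial order: one refining the total degree. -/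
def IsGradedOrder (m : MonomialOrder (Fin s)) : Prop :=
  ∀ a b : Fin s →₀ ℕ, a.degree < b.degree → m.toSyn a < m.toSyn b

variable {s} in
/-- The leading exponent (exponent of the leading monomial) of a polynomial with respect
to a monomial order.  (It is `0` by convention for the zero polynomial.) -/
noncomputable def lExp (m : MonomialOrder (Fin s)) (f : MvPolynomial (Fin s) K) :
    Fin s →₀ ℕ :=
  m.toSyn.symm (f.support.sup (fun a => m.toSyn a))

variable {s} in
/-- The initial ideal of `I`: the ideal generated by the leading monomials of the nonzero
elements of `I`. -/
noncomputable def initIdeal (m : MonomialOrder (Fin s)) (I : Ideal (MvPolynomial (Fin s) K)) :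
    Ideal (MvPolynomial (Fin s) K) :=
  Ideal.span { g | ∃ f ∈ I, f ≠ 0 ∧ g = monomial (lExp K m f) (1 : K) }

variable {s} in
/-- `f` is (or represents) a zero divisor of `S/I`. -/
def IsZeroDivOn (I : Ideal (MvPolynomial (Fin s) K)) (f : MvPolynomial (Fin s) K) : Prop :=
  ∃ g, g ∉ I ∧ f * g ∈ I

variable {s} in
/-- The set `M_{≺,d}` of exponents of the standard monomials of degree `d` that are
zero divisors of `S/in_≺(I)`. -/
noncomputable def Mset (m : MonomialOrder (Fin s)) (I : Ideal (MvPolynomial (Fin s) K))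
    (d : ℕ) : Set (Fin s →₀ ℕ) :=
  { a | a.degree = d ∧ monomial a (1 : K) ∉ initIdeal K m I ∧
      IsZeroDivOn K (initIdeal K m I) (monomial a (1 : K)) }

variable {s} in
/-- The set `F_{≺,d}` of nonzero zero divisors of `S/I` which are `K`-linear combinations
of standard monomials of degree `d`. -/
noncomputable def Fset (m : MonomialOrder (Fin s)) (I : Ideal (MvPolynomial (Fin s) K))
    (d : ℕ) : Set (MvPolynomial (Fin s) K) :=
  { f | f ≠ 0 ∧ (∀ a ∈ f.support, a.degree = d ∧ monomial a (1 : K) ∉ initIdeal K m I) ∧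
      IsZeroDivOn K I f }

variable {s} in
/-- The footprint function `fp_I`. -/
noncomputable def fp (m : MonomialOrder (Fin s)) (I : Ideal (MvPolynomial (Fin s) K))
    (d : ℕ) : ℤ :=
  if (Mset K m I d).Nonempty then
    (degQ K s I : ℤ) -
      sSup ((fun a => (degQ K s (initIdeal K m I ⊔ Ideal.span {monomial a (1 : K)}) : ℤ)) ''
        Mset K m I d)
  else (degQ K s I : ℤ)

variable {s} in
/-- The minimum distance function `δ_I`. -/
noncomputable def delta (m : MonomialOrder (Fin s)) (I : Ideal (MvPolynomial (Fin s) K))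
    (d : ℕ) : ℤ :=
  if (Fset K m I d).Nonempty then
    (degQ K s I : ℤ) -
      sSup ((fun f => (degQ K s (I ⊔ Ideal.span {f}) : ℤ)) '' Fset K m I d)
  else (degQ K s I : ℤ)

variable {s} in
/-- The vanishing ideal of a set of points of projective space: the ideal generated by
the homogeneous polynomials vanishing at (representatives of) all points of `X`. -/
noncomputable def vanishingIdeal (X : Set (Projectivization K (Fin s → K))) :
    Ideal (MvPolynomial (Fin s) K) :=
  Ideal.span { f | (∃ n, f.IsHomogeneous n) ∧ ∀ p ∈ X, eval p.rep f = 0 }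

variable {s} in
/-- The set of zeros in `X` of a (homogeneous) polynomial `f`. -/
def VX (X : Set (Projectivization K (Fin s → K))) (f : MvPolynomial (Fin s) K) :
    Set (Projectivization K (Fin s → K)) :=
  { p ∈ X | eval p.rep f = 0 }


/-!
Division by the nonzero elements of `I` (whose leading coefficients are units over a field)
reduces every `f` modulo `I` to a normal form `r` supported on standard monomials; for
homogeneous `f` and graded `I`, taking the degree-`d` component keeps `r` homogeneous. Since
`f - r ∈ I`, the polynomials `f` and `r` are zero divisors of `S/I` together and generate the
same ideal together with `I`, while a nonzero `r` with standard support is never in `I`. Hence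
`F_{≺,d} ⊆ F_d`, and every `f ∈ F_d` can be replaced by an element of `F_{≺,d}` without
changing `(I, f)`.
-/

section NormalForm

variable {K : Type*} [Field K] {s : ℕ} (m : MonomialOrder (Fin s))

theorem monomial_mem_initIdeal_iff {I : Ideal (MvPolynomial (Fin s) K)} {a : Fin s →₀ ℕ} :
    monomial a (1 : K) ∈ initIdeal K m I ↔ ∃ g ∈ I, g ≠ 0 ∧ m.degree g ≤ a := by
  have hgens : { g | ∃ f ∈ I, f ≠ 0 ∧ g = monomial (lExp K m f) (1 : K) } =
      (fun b => monomial b (1 : K)) '' { b | ∃ f ∈ I, f ≠ 0 ∧ b = m.degree f } := by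
    ext g
    constructor
    · rintro ⟨f, hfI, hf0, rfl⟩
      exact ⟨m.degree f, ⟨f, hfI, hf0, rfl⟩, rfl⟩
    · rintro ⟨b, ⟨f, hfI, hf0, rfl⟩, rfl⟩
      exact ⟨f, hfI, hf0, rfl⟩
  rw [initIdeal, hgens, mem_ideal_span_monomial_image, support_monomial, if_neg one_ne_zero]
  simp only [Finset.mem_singleton, forall_eq]
  constructor
  · rintro ⟨_, ⟨g, hgI, hg0, rfl⟩, hle⟩
    exact ⟨g, hgI, hg0, hle⟩
  · rintro ⟨g, hgI, hg0, hle⟩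
    exact ⟨m.degree g, ⟨g, hgI, hg0, rfl⟩, hle⟩

theorem notMem_of_support_notMem_initIdeal {I : Ideal (MvPolynomial (Fin s) K)}
    {r : MvPolynomial (Fin s) K} (hr : r ≠ 0)
    (hst : ∀ a ∈ r.support, monomial a (1 : K) ∉ initIdeal K m I) : r ∉ I := fun hrI =>
  hst _ ((m.degree_mem_support_iff r).mpr hr)
    ((monomial_mem_initIdeal_iff m).mpr ⟨r, hrI, hr, le_rfl⟩)

theorem exists_sub_mem_support_notMem_initIdeal (I : Ideal (MvPolynomial (Fin s) K))
    (f : MvPolynomial (Fin s) K) :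
    ∃ r, f - r ∈ I ∧ ∀ a ∈ r.support, monomial a (1 : K) ∉ initIdeal K m I := by
  obtain ⟨g, r, hf, -, hr⟩ := m.div_set (B := { b | b ∈ I ∧ b ≠ 0 })
    (fun b hb => (m.leadingCoeff_ne_zero_iff.mpr hb.2).isUnit) f
  refine ⟨r, ?_, fun a ha hmem => ?_⟩
  · rw [hf, add_sub_cancel_right]
    exact Submodule.sum_mem _ fun b _ => I.mul_mem_left _ b.2.1
  · obtain ⟨b, hbI, hb0, hle⟩ := (monomial_mem_initIdeal_iff m).mp hmem
    exact hr a ha b ⟨hbI, hb0⟩ hle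

theorem exists_sub_mem_isHomogeneous_support_notMem_initIdeal
    {I : Ideal (MvPolynomial (Fin s) K)} (hI : IsGradedIdeal K s I)
    {f : MvPolynomial (Fin s) K} {d : ℕ} (hf : f.IsHomogeneous d) :
    ∃ r, f - r ∈ I ∧
      ∀ a ∈ r.support, a.degree = d ∧ monomial a (1 : K) ∉ initIdeal K m I := by
  obtain ⟨r, hrI, hr⟩ := exists_sub_mem_support_notMem_initIdeal m I f
  refine ⟨homogeneousComponent d r, ?_, fun a ha => ?_⟩
  · have := hI _ hrI d
    rwa [map_sub, homogeneousComponent_of_mem ((mem_homogeneousSubmodule _ _).mpr hf),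
      if_pos rfl] at this
  · rw [MvPolynomial.mem_support_iff, coeff_homogeneousComponent] at ha
    split_ifs at ha with had
    · exact ⟨had, hr a (MvPolynomial.mem_support_iff.mpr ha)⟩
    · exact absurd rfl ha

end NormalForm

section CongrModIdeal

variable {R : Type*} [CommRing R] {I : Ideal R} {f r : R}

theorem sup_span_singleton_le_of_sub_mem (h : f - r ∈ I) :
    I ⊔ Ideal.span {f} ≤ I ⊔ Ideal.span {r} := by
  refine sup_le le_sup_left ?_
  rw [Ideal.span_singleton_le_iff_mem, show f = (f - r) + r by ring]
  exact Ideal.add_mem _ (Ideal.mem_sup_left h)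
    (Ideal.mem_sup_right (Ideal.mem_span_singleton_self r))

theorem sup_span_singleton_eq_of_sub_mem (h : f - r ∈ I) :
    I ⊔ Ideal.span {f} = I ⊔ Ideal.span {r} :=
  le_antisymm (sup_span_singleton_le_of_sub_mem h)
    (sup_span_singleton_le_of_sub_mem (sub_mem_comm_iff.mp h))

end CongrModIdeal

section ZeroDivisors

variable {K : Type*} [Field K] {s : ℕ}

theorem isZeroDivOn_of_sub_mem {I : Ideal (MvPolynomial (Fin s) K)}
    {f r : MvPolynomial (Fin s) K} (h : f - r ∈ I) (hf : IsZeroDivOn K I f) :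
    IsZeroDivOn K I r := by
  obtain ⟨g, hg, hfg⟩ := hf
  refine ⟨g, hg, ?_⟩
  rw [show r * g = f * g - (f - r) * g by ring]
  exact I.sub_mem hfg (I.mul_mem_right g h)

/-- The set `F_d` of the paper. -/
def homogZeroDivs (I : Ideal (MvPolynomial (Fin s) K)) (d : ℕ) :
    Set (MvPolynomial (Fin s) K) :=
  { f | f.IsHomogeneous d ∧ f ∉ I ∧ IsZeroDivOn K I f }

variable (m : MonomialOrder (Fin s)) (d : ℕ)

theorem Fset_subset_homogZeroDivs (I : Ideal (MvPolynomial (Fin s) K)) :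
    Fset K m I d ⊆ homogZeroDivs I d := by
  rintro f ⟨hf0, hsupp, hzd⟩
  refine ⟨fun a ha => ?_,
    notMem_of_support_notMem_initIdeal m hf0 fun a ha => (hsupp a ha).2, hzd⟩
  have had := (hsupp a (MvPolynomial.mem_support_iff.mpr ha)).1
  rwa [Finsupp.degree_eq_weight_one] at had

theorem exists_mem_Fset_sup_span_eq {I : Ideal (MvPolynomial (Fin s) K)}
    (hI : IsGradedIdeal K s I) {f : MvPolynomial (Fin s) K} (hf : f ∈ homogZeroDivs I d) :
    ∃ r ∈ Fset K m I d, I ⊔ Ideal.span {f} = I ⊔ Ideal.span {r} := by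
  obtain ⟨hfd, hfI, hzd⟩ := hf
  obtain ⟨r, hrI, hr⟩ := exists_sub_mem_isHomogeneous_support_notMem_initIdeal m hI hfd
  have hr0 : r ≠ 0 := by
    rintro rfl
    exact hfI (sub_zero f ▸ hrI)
  exact ⟨r, ⟨hr0, hr, isZeroDivOn_of_sub_mem hrI hzd⟩, sup_span_singleton_eq_of_sub_mem hrI⟩

theorem image_Fset_eq_image_homogZeroDivs {I : Ideal (MvPolynomial (Fin s) K)}
    (hI : IsGradedIdeal K s I) (φ : Ideal (MvPolynomial (Fin s) K) → ℤ) :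
    (fun f => φ (I ⊔ Ideal.span {f})) '' Fset K m I d =
      (fun f => φ (I ⊔ Ideal.span {f})) '' homogZeroDivs I d := by
  refine (Set.image_mono (Fset_subset_homogZeroDivs m d I)).antisymm ?_
  rintro _ ⟨f, hf, rfl⟩
  obtain ⟨r, hr, heq⟩ := exists_mem_Fset_sup_span_eq m d hI hf
  exact ⟨r, hr, congrArg φ heq.symm⟩

end ZeroDivisors

theorem delta_indep_of_order_general
    {K : Type*} [Field K] {s : ℕ}
    (m : MonomialOrder (Fin s))
    (I : Ideal (MvPolynomial (Fin s) K)) (hI : IsGradedIdeal K s I)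
    (d : ℕ) :
    (({ f : MvPolynomial (Fin s) K |
          f.IsHomogeneous d ∧ f ∉ I ∧ IsZeroDivOn K I f }).Nonempty →
      delta K m I d = (degQ K s I : ℤ) -
        sSup ((fun f => (degQ K s (I ⊔ Ideal.span {f}) : ℤ)) ''
          { f : MvPolynomial (Fin s) K |
              f.IsHomogeneous d ∧ f ∉ I ∧ IsZeroDivOn K I f })) ∧
    ({ f : MvPolynomial (Fin s) K |
          f.IsHomogeneous d ∧ f ∉ I ∧ IsZeroDivOn K I f } = ∅ →
      Fset K m I d = ∅ ∧ delta K m I d = (degQ K s I : ℤ)) := by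
  change ((homogZeroDivs I d).Nonempty → _) ∧ (homogZeroDivs I d = ∅ → _)
  have himage := image_Fset_eq_image_homogZeroDivs m d hI (fun J => (degQ K s J : ℤ))
  refine ⟨fun ⟨f, hf⟩ => ?_, fun hempty => ?_⟩
  · obtain ⟨r, hr, -⟩ := exists_mem_Fset_sup_span_eq m d hI hf
    rw [delta, if_pos ⟨r, hr⟩, himage]
    rfl
  · have hFset : Fset K m I d = ∅ :=
      Set.subset_eq_empty (Fset_subset_homogZeroDivs m d I) hempty
    refine ⟨hFset, ?_⟩
    rw [delta, if_neg (hFset ▸ Set.not_nonempty_empty)]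

/-- The minimum distance function `δ_I` does not depend on the monomial
order: it can be computed from the set `F_d` of all homogeneous zero divisors of `S/I` of
degree `d` not lying in `I`. -/
theorem delta_indep_of_order
    {K : Type*} [Field K] {s : ℕ} (hs : 2 ≤ s)
    (m : MonomialOrder (Fin s)) (hm : IsGradedOrder m)
    (I : Ideal (MvPolynomial (Fin s) K)) (hI : IsGradedIdeal K s I)
    (d : ℕ) (hd : 1 ≤ d) :
    (({ f : MvPolynomial (Fin s) K |
          f.IsHomogeneous d ∧ f ∉ I ∧ IsZeroDivOn K I f }).Nonempty →
      delta K m I d = (degQ K s I : ℤ) -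
        sSup ((fun f => (degQ K s (I ⊔ Ideal.span {f}) : ℤ)) ''
          { f : MvPolynomial (Fin s) K |
              f.IsHomogeneous d ∧ f ∉ I ∧ IsZeroDivOn K I f })) ∧
    ({ f : MvPolynomial (Fin s) K |
          f.IsHomogeneous d ∧ f ∉ I ∧ IsZeroDivOn K I f } = ∅ →
      Fset K m I d = ∅ ∧ delta K m I d = (degQ K s I : ℤ)) :=
  delta_indep_of_order_general m I hI d

end MDF
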